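/- arXiv:1906.08540 — 2 statements merged into one kernel-verified Lean document; each statement's English description precedes it below -/
import Mathlib

section
/- Screening test (Lemma 1): Let (u*, v*) be any minimizer of Ψ_κ over the feasible set F. Then for every index i with μ_i < (ε²/κ)·r_i(K) one has e^{u*_i} = ε/κ, and for every index j with ν_j < κε²·c_j(K) one has e^{v*_j} = εκ. -/
/-!
With `v` fixed, `Ψ_κ` is separable in `u`: the `i`-th summand is `A * e^{u_i} - κ μ_i u_i` with
`A = ∑_j K_{ij} e^{v_j} ≥ ε κ r_i(K)` on `F`. As a function of `t = e^{u_i}` this is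
`A t - κ μ_i log t`, which is strictly increasing on `[ε/κ, ∞)` as soon as `κ μ_i < A ε/κ`, and
that is implied by `μ_i < (ε²/κ) r_i(K)`. So a minimizer with `e^{u_i} > ε/κ` could be improved
by lowering `e^{u_i}` to `ε/κ`. The statement for `v` is the one for `u` applied to `Kᵀ`, `ν`, `μ`
and `κ⁻¹`, since `Ψ_κ(u, v)` for `K` equals `Ψ_{κ⁻¹}(v, u)` for `Kᵀ`.
-/

open Real Finset

lemma sub_mul_log_lt_sub_mul_log {A b c a : ℝ} (hA : 0 ≤ A) (hb : 0 < b) (hba : b < a)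
    (hc : c < A * b) : A * b - c * log b < A * a - c * log a := by
  have hlog_pos : 0 < log a - log b := sub_pos.2 (log_lt_log hb hba)
  have hlog_le : log a - log b ≤ (a - b) / b := by
    have := log_le_sub_one_of_pos (div_pos (hb.trans hba) hb)
    rwa [log_div (hb.trans hba).ne' hb.ne', div_sub_one hb.ne'] at this
  have : c * (log a - log b) < A * (a - b) :=
    calc c * (log a - log b) < A * b * (log a - log b) := mul_lt_mul_of_pos_right hc hlog_pos
      _ ≤ A * b * ((a - b) / b) := mul_le_mul_of_nonneg_left hlog_le (by positivity)
      _ = A * (a - b) := by field_simp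
  linarith

lemma sum_apply_update_sub_sum {ι : Type*} [Fintype ι] [DecidableEq ι] (F : ι → ℝ → ℝ)
    (x : ι → ℝ) (i : ι) (t : ℝ) :
    ∑ k, F k (Function.update x i t k) - ∑ k, F k (x k) = F i t - F i (x i) := by
  rw [← sum_sub_distrib, sum_eq_single i (fun k _ hk => by simp [hk]) (by simp)]
  simp

lemma exp_eq_of_forall_sum_le {ι : Type*} [Fintype ι] {w c x : ι → ℝ} {b : ℝ} (hb : 0 < b)
    (hx : ∀ k, b ≤ exp (x k))
    (hmin : ∀ y : ι → ℝ, (∀ k, b ≤ exp (y k)) →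
      ∑ k, (w k * exp (x k) - c k * x k) ≤ ∑ k, (w k * exp (y k) - c k * y k))
    {i : ι} (hw : 0 ≤ w i) (hc : c i < w i * b) : exp (x i) = b := by
  classical
  refine le_antisymm (not_lt.1 fun hlt => ?_) (hx i)
  have hfeas : ∀ k, b ≤ exp (Function.update x i (log b) k) := by
    intro k
    rcases eq_or_ne k i with rfl | hk
    · simp [exp_log hb]
    · simpa [hk] using hx k
  have hle := hmin _ hfeas
  have hupd := sum_apply_update_sub_sum (fun k s => w k * exp s - c k * s) x i (log b)
  have hstrict := sub_mul_log_lt_sub_mul_log hw hb hlt hc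
  rw [exp_log hb] at hupd
  rw [log_exp] at hstrict
  linarith

/-- The function `Ψ_κ(u, v)`. -/
noncomputable def dualObjective {ι ι' : Type*} [Fintype ι] [Fintype ι'] (K : ι → ι' → ℝ)
    (μ : ι → ℝ) (ν : ι' → ℝ) (κ : ℝ) (u : ι → ℝ) (v : ι' → ℝ) : ℝ :=
  (∑ i, ∑ j, exp (u i) * K i j * exp (v j)) - κ * (∑ i, u i * μ i) - (1 / κ) * (∑ j, v j * ν j)

section DualObjective

variable {ι ι' : Type*} [Fintype ι] [Fintype ι'] (K : ι → ι' → ℝ) (μ : ι → ℝ) (ν : ι' → ℝ)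
  (κ : ℝ) (u : ι → ℝ) (v : ι' → ℝ)

lemma dualObjective_eq_sum_row :
    dualObjective K μ ν κ u v =
      ∑ i, ((∑ j, K i j * exp (v j)) * exp (u i) - κ * μ i * u i)
        - (1 / κ) * ∑ j, v j * ν j := by
  simp only [dualObjective, sum_sub_distrib, mul_sum, sum_mul]
  congr 2
  · exact sum_congr rfl fun i _ => sum_congr rfl fun j _ => by ring
  · exact sum_congr rfl fun i _ => by ring

lemma dualObjective_transpose :
    dualObjective (fun j i => K i j) ν μ κ⁻¹ v u = dualObjective K μ ν κ u v := by
  simp only [dualObjective, one_div, inv_inv]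
  rw [sum_comm, sub_right_comm]
  congr 2
  exact sum_congr rfl fun i _ => sum_congr rfl fun j _ => by ring

lemma exp_eq_of_forall_dualObjective_le (hK : ∀ i j, 0 ≤ K i j) {ε : ℝ} (hε : 0 < ε)
    (hκ : 0 < κ) (hu : ∀ i, ε / κ ≤ exp (u i)) (hv : ∀ j, ε * κ ≤ exp (v j))
    (hmin : ∀ (u' : ι → ℝ) (v' : ι' → ℝ), (∀ i, ε / κ ≤ exp (u' i)) →
      (∀ j, ε * κ ≤ exp (v' j)) → dualObjective K μ ν κ u v ≤ dualObjective K μ ν κ u' v')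
    {i : ι} (hi : μ i < ε ^ 2 / κ * ∑ j, K i j) : exp (u i) = ε / κ := by
  have hrow_le : ε * κ * ∑ j, K i j ≤ ∑ j, K i j * exp (v j) := by
    rw [mul_sum]
    exact sum_le_sum fun j _ => by nlinarith [hK i j, hv j]
  refine exp_eq_of_forall_sum_le (w := fun i => ∑ j, K i j * exp (v j))
    (c := fun i => κ * μ i) (div_pos hε hκ) hu (fun u' hu' => ?_) ?_ ?_
  · have := hmin u' v hu' hv
    rw [dualObjective_eq_sum_row, dualObjective_eq_sum_row] at this
    linarith
  · exact sum_nonneg fun j _ => mul_nonneg (hK i j) (exp_pos _).le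
  · calc κ * μ i < κ * (ε ^ 2 / κ * ∑ j, K i j) := mul_lt_mul_of_pos_left hi hκ
      _ = ε * κ * (∑ j, K i j) * (ε / κ) := by field_simp
      _ ≤ (∑ j, K i j * exp (v j)) * (ε / κ) :=
        mul_le_mul_of_nonneg_right hrow_le (div_pos hε hκ).le

end DualObjective

theorem screening_test_general
    (n m : ℕ)
    (C : Fin n → Fin m → ℝ)
    (η : ℝ)
    (K : Fin n → Fin m → ℝ) (hK : ∀ i j, K i j = Real.exp (-(C i j) / η))
    (μ : Fin n → ℝ) (ν : Fin m → ℝ)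
    (ε κ : ℝ) (hε : 0 < ε) (hκ : 0 < κ)
    (ustar : Fin n → ℝ) (vstar : Fin m → ℝ)
    (hufeas : ∀ i, ε / κ ≤ Real.exp (ustar i))
    (hvfeas : ∀ j, ε * κ ≤ Real.exp (vstar j))
    (hmin : ∀ (u : Fin n → ℝ) (v : Fin m → ℝ),
      (∀ i, ε / κ ≤ Real.exp (u i)) → (∀ j, ε * κ ≤ Real.exp (v j)) →
      (∑ i, ∑ j, Real.exp (ustar i) * K i j * Real.exp (vstar j))
          - κ * (∑ i, ustar i * μ i) - (1 / κ) * (∑ j, vstar j * ν j)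
        ≤ (∑ i, ∑ j, Real.exp (u i) * K i j * Real.exp (v j))
          - κ * (∑ i, u i * μ i) - (1 / κ) * (∑ j, v j * ν j)) :
    (∀ i, μ i < ε ^ 2 / κ * (∑ j, K i j) → Real.exp (ustar i) = ε / κ) ∧
    (∀ j, ν j < κ * ε ^ 2 * (∑ i, K i j) → Real.exp (vstar j) = ε * κ) := by
  have hK_nonneg : ∀ i j, 0 ≤ K i j := fun i j => hK i j ▸ (exp_pos _).le
  refine ⟨fun i hi => exp_eq_of_forall_dualObjective_le K μ ν κ ustar vstar hK_nonneg hε hκ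
    hufeas hvfeas hmin hi, fun j hj => ?_⟩
  have hdiv_inv : ε / κ⁻¹ = ε * κ := div_inv_eq_mul ε κ
  have hmul_inv : ε * κ⁻¹ = ε / κ := (div_eq_mul_inv ε κ).symm
  have := exp_eq_of_forall_dualObjective_le (fun j i => K i j) ν μ κ⁻¹ vstar ustar
    (fun j i => hK_nonneg i j) hε (inv_pos.2 hκ) (hdiv_inv ▸ hvfeas) (hmul_inv ▸ hufeas)
    (fun v u hv hu => by
      rw [dualObjective_transpose, dualObjective_transpose]
      exact hmin u v (hmul_inv ▸ hu) (hdiv_inv ▸ hv))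
    (i := j) (by rwa [div_inv_eq_mul, mul_comm (ε ^ 2)])
  rwa [hdiv_inv] at this

theorem screening_test
    (n m : ℕ) (hn : 0 < n) (hm : 0 < m)
    (C : Fin n → Fin m → ℝ) (hC : ∀ i j, 0 ≤ C i j)
    (η : ℝ) (hη : 0 < η)
    (K : Fin n → Fin m → ℝ) (hK : ∀ i j, K i j = Real.exp (-(C i j) / η))
    (μ : Fin n → ℝ) (ν : Fin m → ℝ)
    (hμpos : ∀ i, 0 < μ i) (hνpos : ∀ j, 0 < ν j)
    (hμsum : ∑ i, μ i = 1) (hνsum : ∑ j, ν j = 1)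
    (ε κ : ℝ) (hε : 0 < ε) (hκ : 0 < κ)
    (ustar : Fin n → ℝ) (vstar : Fin m → ℝ)
    (hufeas : ∀ i, ε / κ ≤ Real.exp (ustar i))
    (hvfeas : ∀ j, ε * κ ≤ Real.exp (vstar j))
    (hmin : ∀ (u : Fin n → ℝ) (v : Fin m → ℝ),
      (∀ i, ε / κ ≤ Real.exp (u i)) → (∀ j, ε * κ ≤ Real.exp (v j)) →
      (∑ i, ∑ j, Real.exp (ustar i) * K i j * Real.exp (vstar j))
          - κ * (∑ i, ustar i * μ i) - (1 / κ) * (∑ j, vstar j * ν j)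
        ≤ (∑ i, ∑ j, Real.exp (u i) * K i j * Real.exp (v j))
          - κ * (∑ i, u i * μ i) - (1 / κ) * (∑ j, v j * ν j)) :
    (∀ i, μ i < ε ^ 2 / κ * (∑ j, K i j) → Real.exp (ustar i) = ε / κ) ∧
    (∀ j, ν j < κ * ε ^ 2 * (∑ i, K i j) → Real.exp (vstar j) = ε * κ) :=
  screening_test_general n m C η K hK μ ν ε κ hε hκ ustar vstar hufeas hvfeas hmin
end

section
/- First-order optimality conditions for the approximate dual of Sinkhorn divergence: Let (u*, v*) be any minimizer of Ψ_κ over the feasible set F. Then for every i one has e^{u*_i}·(K e^{v*})_i ≥ κ μ_i, with equality whenever e^{u*_i} > ε/κ; and for every j one has e^{v*_j}·(Kᵀ e^{u*})_j ≥ ν_j/κ, with equality whenever e^{v*_j} > εκ. -/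
open scoped Classical

/-!
Fixing all coordinates but `u i`, the objective is `A e^s - κ μ_i s` plus a constant, with
`A = (K e^{v*})_i`, and the constraint `ε/κ ≤ e^s` is preserved by increasing `s`. So `u*_i`
minimises this function of one variable on a set containing `[u*_i, ∞)`: its derivative
`A e^{u*_i} - κ μ_i` is nonnegative, and vanishes when the constraint is inactive, since `u*_i` is
then an unconstrained local minimum. Transposing `K` and replacing `κ` by `κ⁻¹` swaps the roles of
`u` and `v`, which gives the conditions on `v*`.
-/

open Real Set Finset

theorem IsMinOn.hasDerivAt_nonneg_of_Ici {f : ℝ → ℝ} {a f' : ℝ} (h : IsMinOn f (Ici a) a)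
    (hf : HasDerivAt f f' a) : 0 ≤ f' := by
  have hcone : (1 : ℝ) ∈ posTangentConeAt (Ici a) a :=
    mem_posTangentConeAt_of_segment_subset (by simp [segment_eq_Icc, Set.Icc_subset_Ici_self])
  simpa using h.localize.hasFDerivWithinAt_nonneg hf.hasFDerivAt.hasFDerivWithinAt hcone

theorem mul_exp_sub_mul_optimality {A b c x : ℝ} (hx : c ≤ exp x)
    (hmin : ∀ s, c ≤ exp s → A * exp x - b * x ≤ A * exp s - b * s) :
    b ≤ A * exp x ∧ (c < exp x → A * exp x = b) := by
  set g : ℝ → ℝ := fun s => A * exp s - b * s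
  have hg : HasDerivAt g (A * exp x - b) x :=
    ((hasDerivAt_exp x).const_mul A).sub ((hasDerivAt_id' x).const_mul b) |>.congr_deriv (by ring)
  refine ⟨?_, fun hcx => ?_⟩
  · have hIci : IsMinOn g (Ici x) x := fun s (hs : x ≤ s) =>
      hmin s (hx.trans (exp_le_exp.mpr hs))
    linarith [hIci.hasDerivAt_nonneg_of_Ici hg]
  · have hloc : IsLocalMin g x :=
      Filter.eventually_of_mem ((isOpen_lt continuous_const continuous_exp).mem_nhds hcx)
        fun s (hs : c < exp s) => hmin s hs.le
    linarith [hloc.hasDerivAt_eq_zero hg]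

theorem Finset.sum_apply_update {ι M : Type*} [Fintype ι] [DecidableEq ι] [AddCommGroup M]
    {β : ι → Type*} (g : ∀ k, β k → M) (u : ∀ k, β k) (i : ι) (s : β i) :
    ∑ k, g k (Function.update u i s k) = ∑ k, g k (u k) + (g i s - g i (u i)) := by
  simp_rw [Function.apply_update (fun k => g k)]
  rw [sum_update_of_mem (mem_univ i), ← add_sum_erase _ _ (mem_univ i), sdiff_singleton_eq_erase]
  abel

section SinkhornDual

variable {ι ι' : Type*} [Fintype ι] [Fintype ι']

noncomputable def sinkhornDual (K : ι → ι' → ℝ) (μ : ι → ℝ) (ν : ι' → ℝ) (κ : ℝ)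
    (u : ι → ℝ) (v : ι' → ℝ) : ℝ :=
  (∑ i, ∑ j, exp (u i) * K i j * exp (v j)) - κ * (∑ i, u i * μ i) - (1 / κ) * (∑ j, v j * ν j)

variable (K : ι → ι' → ℝ) (μ : ι → ℝ) (ν : ι' → ℝ) (κ : ℝ)

theorem sinkhornDual_transpose (u : ι → ℝ) (v : ι' → ℝ) :
    sinkhornDual K μ ν κ u v = sinkhornDual (fun j i => K i j) ν μ κ⁻¹ v u := by
  have hdouble : ∑ i, ∑ j, exp (u i) * K i j * exp (v j)
      = ∑ j, ∑ i, exp (v j) * K i j * exp (u i) := by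
    rw [sum_comm]
    exact sum_congr rfl fun j _ => sum_congr rfl fun i _ => by ring
  simp only [sinkhornDual, hdouble, one_div, inv_inv]
  ring

theorem sinkhornDual_update_left [DecidableEq ι] (u : ι → ℝ) (v : ι' → ℝ) (i : ι) (s : ℝ) :
    sinkhornDual K μ ν κ (Function.update u i s) v = sinkhornDual K μ ν κ u v
      + ((∑ j, K i j * exp (v j)) * (exp s - exp (u i)) - κ * μ i * (s - u i)) := by
  have hrow : ∀ r, ∑ j, exp r * K i j * exp (v j) = exp r * ∑ j, K i j * exp (v j) := fun r => by
    rw [mul_sum]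
    exact sum_congr rfl fun j _ => by ring
  simp only [sinkhornDual]
  rw [sum_apply_update (fun k r => ∑ j, exp r * K k j * exp (v j)),
    sum_apply_update (fun k r => r * μ k), hrow, hrow]
  ring

variable {K μ ν κ} {c : ℝ} {ustar : ι → ℝ} {vstar : ι' → ℝ}

theorem sinkhornDual_row_optimality (hfeas : ∀ i, c ≤ exp (ustar i))
    (hmin : ∀ u, (∀ i, c ≤ exp (u i)) →
      sinkhornDual K μ ν κ ustar vstar ≤ sinkhornDual K μ ν κ u vstar) (i : ι) :
    κ * μ i ≤ exp (ustar i) * ∑ j, K i j * exp (vstar j) ∧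
      (c < exp (ustar i) → exp (ustar i) * ∑ j, K i j * exp (vstar j) = κ * μ i) := by
  simp only [mul_comm (exp (ustar i))]
  refine mul_exp_sub_mul_optimality (hfeas i) fun s hs => ?_
  have hupdate : ∀ k, c ≤ exp (Function.update ustar i s k) := by
    intro k
    rcases eq_or_ne k i with rfl | hk
    · simpa using hs
    · simpa [hk] using hfeas k
  have hle := hmin _ hupdate
  rw [sinkhornDual_update_left] at hle
  linarith

theorem sinkhornDual_column_optimality (hfeas : ∀ j, c ≤ exp (vstar j))
    (hmin : ∀ v, (∀ j, c ≤ exp (v j)) →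
      sinkhornDual K μ ν κ ustar vstar ≤ sinkhornDual K μ ν κ ustar v) (j : ι') :
    ν j / κ ≤ exp (vstar j) * ∑ i, K i j * exp (ustar i) ∧
      (c < exp (vstar j) → exp (vstar j) * ∑ i, K i j * exp (ustar i) = ν j / κ) := by
  rw [div_eq_inv_mul]
  refine sinkhornDual_row_optimality (K := fun j i => K i j) (ν := μ) hfeas (fun v hv => ?_) j
  simpa only [sinkhornDual_transpose K] using hmin v hv

end SinkhornDual

theorem first_order_optimality_general
    (n m : ℕ)
    (K : Fin n → Fin m → ℝ)
    (μ : Fin n → ℝ) (ν : Fin m → ℝ)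
    (ε κ : ℝ)
    (ustar : Fin n → ℝ) (vstar : Fin m → ℝ)
    (hufeas : ∀ i, ε / κ ≤ Real.exp (ustar i))
    (hvfeas : ∀ j, ε * κ ≤ Real.exp (vstar j))
    (hmin : ∀ (u : Fin n → ℝ) (v : Fin m → ℝ),
      (∀ i, ε / κ ≤ Real.exp (u i)) → (∀ j, ε * κ ≤ Real.exp (v j)) →
      (∑ i, ∑ j, Real.exp (ustar i) * K i j * Real.exp (vstar j))
          - κ * (∑ i, ustar i * μ i) - (1 / κ) * (∑ j, vstar j * ν j)
        ≤ (∑ i, ∑ j, Real.exp (u i) * K i j * Real.exp (v j))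
          - κ * (∑ i, u i * μ i) - (1 / κ) * (∑ j, v j * ν j)) :
    (∀ i, κ * μ i ≤ Real.exp (ustar i) * (∑ j, K i j * Real.exp (vstar j)) ∧
      (ε / κ < Real.exp (ustar i) →
        Real.exp (ustar i) * (∑ j, K i j * Real.exp (vstar j)) = κ * μ i)) ∧
    (∀ j, ν j / κ ≤ Real.exp (vstar j) * (∑ i, K i j * Real.exp (ustar i)) ∧
      (ε * κ < Real.exp (vstar j) →
        Real.exp (vstar j) * (∑ i, K i j * Real.exp (ustar i)) = ν j / κ)) := by
  exact ⟨sinkhornDual_row_optimality (vstar := vstar) hufeas (fun u hu => hmin u vstar hu hvfeas),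
    sinkhornDual_column_optimality (K := K) hvfeas (fun v hv => hmin ustar v hufeas hv)⟩

theorem first_order_optimality
    (n m : ℕ) (hn : 0 < n) (hm : 0 < m)
    (C : Fin n → Fin m → ℝ) (hC : ∀ i j, 0 ≤ C i j)
    (η : ℝ) (hη : 0 < η)
    (K : Fin n → Fin m → ℝ) (hK : ∀ i j, K i j = Real.exp (-(C i j) / η))
    (μ : Fin n → ℝ) (ν : Fin m → ℝ)
    (hμpos : ∀ i, 0 < μ i) (hνpos : ∀ j, 0 < ν j)
    (hμsum : ∑ i, μ i = 1) (hνsum : ∑ j, ν j = 1)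
    (ε κ : ℝ) (hε : 0 < ε) (hκ : 0 < κ)
    (ustar : Fin n → ℝ) (vstar : Fin m → ℝ)
    (hufeas : ∀ i, ε / κ ≤ Real.exp (ustar i))
    (hvfeas : ∀ j, ε * κ ≤ Real.exp (vstar j))
    (hmin : ∀ (u : Fin n → ℝ) (v : Fin m → ℝ),
      (∀ i, ε / κ ≤ Real.exp (u i)) → (∀ j, ε * κ ≤ Real.exp (v j)) →
      (∑ i, ∑ j, Real.exp (ustar i) * K i j * Real.exp (vstar j))
          - κ * (∑ i, ustar i * μ i) - (1 / κ) * (∑ j, vstar j * ν j)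
        ≤ (∑ i, ∑ j, Real.exp (u i) * K i j * Real.exp (v j))
          - κ * (∑ i, u i * μ i) - (1 / κ) * (∑ j, v j * ν j)) :
    (∀ i, κ * μ i ≤ Real.exp (ustar i) * (∑ j, K i j * Real.exp (vstar j)) ∧
      (ε / κ < Real.exp (ustar i) →
        Real.exp (ustar i) * (∑ j, K i j * Real.exp (vstar j)) = κ * μ i)) ∧
    (∀ j, ν j / κ ≤ Real.exp (vstar j) * (∑ i, K i j * Real.exp (ustar i)) ∧
      (ε * κ < Real.exp (vstar j) →
        Real.exp (vstar j) * (∑ i, K i j * Real.exp (ustar i)) = ν j / κ)) :=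
  first_order_optimality_general n m K μ ν ε κ ustar vstar hufeas hvfeas hmin
end
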